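/- arXiv:1910.01038 — 3 statements merged into one kernel-verified Lean document; each statement's English description precedes it below -/
import Mathlib

section
/- Let δ > 0 and w(x) = 1 - (1+x)^{-δ}. For every smooth compactly supported function u : [0,∞) → ℂ with u(0) = 0, the weighted Poincaré inequality ‖√(w''') u‖_{L²} ≤ 2 √(1+δ)/√(2+δ) · ‖√(w') u'‖_{L²} holds, where the L² norms are over [0,∞). -/
open MeasureTheory Set

private lemma normsq_eq (z : ℂ) : ‖z‖ ^ 2 = z.re ^ 2 + z.im ^ 2 := by
  rw [Complex.sq_norm, Complex.normSq_apply]; ring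

private lemma integrableOn_of_vanish (g : ℝ → ℝ) (R : ℝ)
    (hg : ContinuousOn g (Ici 0)) (hR : ∀ x, R ≤ x → g x = 0) :
    IntegrableOn g (Ioi (0:ℝ)) := by
  rcases le_or_gt R 0 with h | h
  · have hz : EqOn g (fun _ => (0:ℝ)) (Ioi 0) :=
      fun x hx => hR x (h.trans (le_of_lt hx))
    exact (integrableOn_congr_fun hz measurableSet_Ioi).mpr integrableOn_zero
  · have h1 : IntegrableOn g (Ioc 0 R) :=
      ((hg.mono Icc_subset_Ici_self).integrableOn_Icc).mono_set Ioc_subset_Icc_self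
    have h2 : IntegrableOn g (Ioi R) := by
      have hz : EqOn g (fun _ => (0:ℝ)) (Ioi R) := fun x hx => hR x (le_of_lt hx)
      exact (integrableOn_congr_fun hz measurableSet_Ioi).mpr integrableOn_zero
    have h3 := h1.union h2
    rwa [Ioc_union_Ioi_eq_Ioi h.le] at h3

/-- Weighted Poincaré inequality: for δ > 0 and w(x) = 1 - (1+x)^{-δ}
(so w'(x) = δ(1+x)^{-1-δ} and w'''(x) = δ(1+δ)(2+δ)(1+x)^{-3-δ}), for every
smooth compactly supported u : [0,∞) → ℂ with u(0) = 0,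
‖√(w''') u‖_{L²(0,∞)} ≤ 2√(1+δ)/√(2+δ) · ‖√(w') u'‖_{L²(0,∞)}. -/
theorem stmt1 (δ : ℝ) (hδ : 0 < δ) (u : ℝ → ℂ)
    (hu : ContDiff ℝ (⊤ : ℕ∞) u) (hsupp : HasCompactSupport u) (h0 : u 0 = 0) :
    Real.sqrt (∫ x in Ioi (0 : ℝ),
        δ * (1 + δ) * (2 + δ) * (1 + x) ^ (-3 - δ) * ‖u x‖ ^ 2)
      ≤ 2 * Real.sqrt (1 + δ) / Real.sqrt (2 + δ) *
        Real.sqrt (∫ x in Ioi (0 : ℝ),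
          δ * (1 + x) ^ (-1 - δ) * ‖deriv u x‖ ^ 2) := by
  have hud : Differentiable ℝ u := hu.differentiable (by simp)
  set v : ℝ → ℂ := deriv u with hvdef
  have hvc : Continuous v := hu.continuous_deriv (by simp)
  -- a radius beyond which u and v vanish
  obtain ⟨R₀, hR₀⟩ := hsupp.isCompact.isBounded.subset_closedBall 0
  set R : ℝ := max R₀ 0 + 1 with hRdef
  have hts : ∀ x, R ≤ x → x ∉ tsupport u := by
    intro x hx hmem
    have h1 := hR₀ hmem
    rw [Metric.mem_closedBall, Real.dist_eq, sub_zero] at h1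
    have h2 : x ≤ R₀ := (le_abs_self x).trans h1
    have := le_max_left R₀ 0
    linarith
  have huR : ∀ x, R ≤ x → u x = 0 := fun x hx =>
    image_eq_zero_of_notMem_tsupport (hts x hx)
  have hvR : ∀ x, R ≤ x → v x = 0 := by
    intro x hx
    by_contra hne
    exact hts x hx (support_deriv_subset (Function.mem_support.mpr hne))
  -- the function n = ‖u‖² and its derivative n'
  set n : ℝ → ℝ := fun x => ‖u x‖ ^ 2 with hndef
  set n' : ℝ → ℝ := fun x =>
    2 * ((u x).re * (v x).re + (u x).im * (v x).im) with hn'def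
  have hnd : ∀ x, HasDerivAt n (n' x) x := by
    intro x
    have hre : HasDerivAt (fun y => (u y).re) ((v x).re) x :=
      Complex.reCLM.hasFDerivAt.comp_hasDerivAt x (hud x).hasDerivAt
    have him : HasDerivAt (fun y => (u y).im) ((v x).im) x :=
      Complex.imCLM.hasFDerivAt.comp_hasDerivAt x (hud x).hasDerivAt
    have h1 := (hre.pow 2).add (him.pow 2)
    have h2 : n = fun y => (u y).re ^ 2 + (u y).im ^ 2 :=
      funext fun y => normsq_eq (u y)
    rw [h2]
    refine h1.congr_deriv ?_
    push_cast
    ring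
  -- rpow derivative helper
  have hrpow : ∀ (e x : ℝ), 0 < 1 + x →
      HasDerivAt (fun y : ℝ => (1+y) ^ e) (e * (1+x) ^ (e-1)) x := by
    intro e x hx
    have h1 : HasDerivAt (fun y : ℝ => 1 + y) 1 x := by
      simpa using (hasDerivAt_id x).const_add (1:ℝ)
    have := (Real.hasDerivAt_rpow_const (x := 1+x) (p := e) (Or.inl hx.ne')).comp x h1
    exact this.congr_deriv (mul_one _)
  -- continuity helpers
  have hrc : ∀ e : ℝ, ContinuousOn (fun x : ℝ => (1+x) ^ e) (Ici 0) := by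
    intro e
    apply ContinuousOn.rpow_const (continuous_const.add continuous_id).continuousOn
    intro x hx
    left
    have : (0:ℝ) ≤ x := hx
    simp only [Pi.add_apply, id]; positivity
  have hnc : Continuous n := (hu.continuous.norm.pow 2)
  have hn'c : Continuous n' := by
    apply Continuous.mul continuous_const
    exact ((Complex.continuous_re.comp hu.continuous).mul
        (Complex.continuous_re.comp hvc)).add
      ((Complex.continuous_im.comp hu.continuous).mul
        (Complex.continuous_im.comp hvc))
  -- the three integrands
  set g₁ : ℝ → ℝ := fun x => (1+x) ^ (-3-δ) * n x with hg₁def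
  set g₂ : ℝ → ℝ := fun x => (1+x) ^ (-2-δ) * n' x with hg₂def
  set gB : ℝ → ℝ := fun x => (1+x) ^ (-1-δ) * ‖v x‖ ^ 2 with hgBdef
  have hg₁c : ContinuousOn g₁ (Ici 0) := (hrc _).mul hnc.continuousOn
  have hg₂c : ContinuousOn g₂ (Ici 0) := (hrc _).mul hn'c.continuousOn
  have hgBc : ContinuousOn gB (Ici 0) :=
    (hrc _).mul (hvc.norm.pow 2).continuousOn
  have hg₁R : ∀ x, R ≤ x → g₁ x = 0 := by
    intro x hx; simp [hg₁def, hndef, huR x hx]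
  have hg₂R : ∀ x, R ≤ x → g₂ x = 0 := by
    intro x hx; simp [hg₂def, hn'def, hvR x hx]
  have hgBR : ∀ x, R ≤ x → gB x = 0 := by
    intro x hx; simp [hgBdef, hvR x hx]
  have hg₁i : IntegrableOn g₁ (Ioi (0:ℝ)) := integrableOn_of_vanish g₁ R hg₁c hg₁R
  have hg₂i : IntegrableOn g₂ (Ioi (0:ℝ)) := integrableOn_of_vanish g₂ R hg₂c hg₂R
  have hgBi : IntegrableOn gB (Ioi (0:ℝ)) := integrableOn_of_vanish gB R hgBc hgBR
  set A : ℝ := ∫ x in Ioi (0:ℝ), g₁ x with hAdef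
  set B : ℝ := ∫ x in Ioi (0:ℝ), gB x with hBdef
  have hA0 : 0 ≤ A := by
    apply setIntegral_nonneg measurableSet_Ioi
    intro x hx
    have hx0 : (0:ℝ) < x := hx
    have : (0:ℝ) < 1 + x := by linarith
    simp only [hg₁def, hndef]
    positivity
  have hB0 : 0 ≤ B := by
    apply setIntegral_nonneg measurableSet_Ioi
    intro x hx
    have hx0 : (0:ℝ) < x := hx
    have : (0:ℝ) < 1 + x := by linarith
    simp only [hgBdef]
    positivity
  -- F and the fundamental theorem of calculus
  set F : ℝ → ℝ := fun x => (1+x) ^ (-2-δ) * n x with hFdef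
  set F' : ℝ → ℝ := fun x => (-2-δ) * g₁ x + g₂ x with hF'def
  have hFderiv : ∀ x ∈ Ioi (0:ℝ), HasDerivAt F (F' x) x := by
    intro x hx
    have hx0 : (0:ℝ) < x := hx
    have h1x : (0:ℝ) < 1 + x := by linarith
    have h := (hrpow (-2-δ) x h1x).mul (hnd x)
    have he : (-2-δ) - 1 = -3-δ := by ring
    rw [he] at h
    refine h.congr_deriv ?_
    simp only [hF'def, hg₁def, hg₂def]
    ring
  have hFcont : ContinuousWithinAt F (Ici 0) 0 :=
    (((hrc (-2-δ)).mul hnc.continuousOn) 0 (by simp)).mono (by simp)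
  have hFtop : Filter.Tendsto F Filter.atTop (nhds 0) := by
    apply Filter.Tendsto.congr' _ tendsto_const_nhds
    filter_upwards [Filter.eventually_ge_atTop R] with x hx
    simp [hFdef, hndef, huR x hx]
  have hF'i : IntegrableOn F' (Ioi (0:ℝ)) := (hg₁i.const_mul _).add hg₂i
  have hFTC : ∫ x in Ioi (0:ℝ), F' x = 0 - F 0 :=
    integral_Ioi_of_hasDerivAt_of_tendsto hFcont hFderiv hF'i hFtop
  have hF0 : F 0 = 0 := by simp [hFdef, hndef, h0]
  have hsplit : ∫ x in Ioi (0:ℝ), F' x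
      = (-2-δ) * A + ∫ x in Ioi (0:ℝ), g₂ x := by
    rw [hF'def]
    rw [integral_add (hg₁i.const_mul _) hg₂i, integral_const_mul]
  have hg₂int : ∫ x in Ioi (0:ℝ), g₂ x = (2+δ) * A := by
    have := hFTC
    rw [hsplit, hF0] at this
    linarith
  -- pointwise bound
  have hptwise : ∀ x ∈ Ioi (0:ℝ),
      (2+δ) * g₂ x ≤ (2+δ)^2/2 * g₁ x + 2 * gB x := by
    intro x hx
    have hx0 : (0:ℝ) < x := hx
    have ht : (0:ℝ) < 1 + x := by linarith
    set a : ℝ := ‖u x‖ with hadef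
    set b : ℝ := ‖v x‖ with hbdef
    have hn'le : n' x ≤ 2 * (a * b) := by
      have hre : (u x).re * (v x).re + (u x).im * (v x).im
          = ((starRingEnd ℂ) (u x) * v x).re := by
        simp [Complex.mul_re]
      have habs : ‖(starRingEnd ℂ) (u x) * v x‖ = a * b := by
        simp only [norm_mul, Complex.norm_conj, hadef, hbdef]
      have hle := Complex.re_le_norm ((starRingEnd ℂ) (u x) * v x)
      rw [habs] at hle
      rw [hn'def]
      simp only
      rw [hre]
      linarith
    set c : ℝ := (1+x) ^ ((-3-δ)/2) * a with hcdef
    set d : ℝ := (1+x) ^ ((-1-δ)/2) * b with hddef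
    have hc2 : c^2 = g₁ x := by
      rw [hcdef, hg₁def, hndef]
      simp only
      rw [mul_pow, ← hadef]
      congr 1
      rw [sq, ← Real.rpow_add ht]
      congr 1
      ring
    have hd2 : d^2 = gB x := by
      rw [hddef, hgBdef]
      simp only
      rw [mul_pow, ← hbdef]
      congr 1
      rw [sq, ← Real.rpow_add ht]
      congr 1
      ring
    have hcd : (1+x) ^ (-2-δ) * (a * b) = c * d := by
      rw [hcdef, hddef]
      rw [show c * d = ((1+x) ^ ((-3-δ)/2) * (1+x) ^ ((-1-δ)/2)) * (a * b) from by
        rw [hcdef, hddef]; ring]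
      rw [← Real.rpow_add ht]
      congr 2
      ring
    have hg₂le : g₂ x ≤ 2 * (c * d) := by
      rw [hg₂def]
      simp only
      calc (1+x) ^ (-2-δ) * n' x ≤ (1+x) ^ (-2-δ) * (2 * (a*b)) := by
            apply mul_le_mul_of_nonneg_left hn'le (Real.rpow_nonneg ht.le _)
        _ = 2 * (c * d) := by rw [← hcd]; ring
    have hsq := sq_nonneg ((2+δ) * c - 2 * d)
    nlinarith [hg₂le, hc2, hd2, hδ]
  -- integrate the pointwise bound
  have hmono : ∫ x in Ioi (0:ℝ), (2+δ) * g₂ x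
      ≤ ∫ x in Ioi (0:ℝ), ((2+δ)^2/2 * g₁ x + 2 * gB x) :=
    setIntegral_mono_on (hg₂i.const_mul _)
      ((hg₁i.const_mul _).add (hgBi.const_mul _)) measurableSet_Ioi hptwise
  have hABineq : (2+δ)^2 * A ≤ 4 * B := by
    rw [integral_const_mul, hg₂int,
      integral_add (hg₁i.const_mul _) (hgBi.const_mul _),
      integral_const_mul, integral_const_mul, ← hAdef, ← hBdef] at hmono
    nlinarith [hmono, hδ, hA0]
  -- rewrite the goal integrals
  have hL : ∫ x in Ioi (0:ℝ),
      δ * (1 + δ) * (2 + δ) * (1 + x) ^ (-3 - δ) * ‖u x‖ ^ 2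
      = δ * (1+δ) * (2+δ) * A := by
    rw [hAdef, ← integral_const_mul]
    apply setIntegral_congr_fun measurableSet_Ioi
    intro x _
    simp only [hg₁def, hndef]
    ring
  have hR2 : ∫ x in Ioi (0:ℝ), δ * (1 + x) ^ (-1 - δ) * ‖deriv u x‖ ^ 2
      = δ * B := by
    rw [hBdef, ← integral_const_mul]
    apply setIntegral_congr_fun measurableSet_Ioi
    intro x _
    simp only [hgBdef, ← hvdef]
    ring
  rw [hL, hR2]
  have h1δ : (0:ℝ) < 1 + δ := by linarith
  have h2δ : (0:ℝ) < 2 + δ := by linarith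
  have hK0 : 0 ≤ 2 * Real.sqrt (1+δ) / Real.sqrt (2+δ) := by positivity
  have hKsq : (2 * Real.sqrt (1+δ) / Real.sqrt (2+δ))^2 = 4 * (1+δ) / (2+δ) := by
    rw [div_pow, mul_pow, Real.sq_sqrt h1δ.le, Real.sq_sqrt h2δ.le]
    norm_num
  have hKey : δ * (1+δ) * (2+δ) * A
      ≤ (2 * Real.sqrt (1+δ) / Real.sqrt (2+δ))^2 * (δ * B) := by
    rw [hKsq, div_mul_eq_mul_div, le_div_iff₀ h2δ]
    nlinarith [mul_le_mul_of_nonneg_left hABineq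
      (show (0:ℝ) ≤ δ * (1+δ) by positivity)]
  calc Real.sqrt (δ * (1+δ) * (2+δ) * A)
      ≤ Real.sqrt ((2 * Real.sqrt (1+δ) / Real.sqrt (2+δ))^2 * (δ * B)) :=
        Real.sqrt_le_sqrt hKey
    _ = 2 * Real.sqrt (1+δ) / Real.sqrt (2+δ) * Real.sqrt (δ * B) := by
        rw [Real.sqrt_mul (sq_nonneg _), Real.sqrt_sq hK0]
end

section
/- Let δ > 0, x₀ ∈ ℝ, r > 0, and let χ₀ ∈ C_c^∞(ℝ) take values in [0,1] with χ₀ ≡ 1 on a neighborhood of [x₀-r, x₀+r], and let χ₁ ∈ C_c^∞(ℝ) satisfy χ₁ ≡ 1 on supp χ₀. Then there is a constant C > 0 (depending on δ, χ₀) such that for every u ∈ H¹(ℝ, ℂ), ‖(1+|x-x₀|)^{-(3+δ)/2} u‖_{L²(ℝ)} ≤ (2/(2+δ)) ‖(1+|x-x₀|)^{-(1+δ)/2} u'‖_{L²(ℝ)} + C ‖χ₁ u‖_{L²(ℝ)}. -/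
open MeasureTheory Set



private lemma sqrt_cs2 {a b c d : ℝ} (ha : 0 ≤ a) (hb : 0 ≤ b) (hc : 0 ≤ c) (hd : 0 ≤ d) :
    Real.sqrt a * Real.sqrt b + Real.sqrt c * Real.sqrt d
      ≤ Real.sqrt (a + c) * Real.sqrt (b + d) := by
  rw [← Real.sqrt_mul (by linarith) (b + d)]
  have h1 : 0 ≤ Real.sqrt a * Real.sqrt b + Real.sqrt c * Real.sqrt d := by positivity
  rw [show (a + c) * (b + d) = (a*b) + (a*d + c*b) + (c*d) by ring]
  refine (Real.le_sqrt h1 (by positivity)).mpr ?_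
  have e1 : Real.sqrt a ^ 2 = a := Real.sq_sqrt ha
  have e2 : Real.sqrt b ^ 2 = b := Real.sq_sqrt hb
  have e3 : Real.sqrt c ^ 2 = c := Real.sq_sqrt hc
  have e4 : Real.sqrt d ^ 2 = d := Real.sq_sqrt hd
  nlinarith [sq_nonneg (Real.sqrt a * Real.sqrt d - Real.sqrt c * Real.sqrt b)]

private lemma myCS {α : Type*} [MeasurableSpace α] {μ : Measure α} {f g : α → ℝ}
    (hfm : AEStronglyMeasurable f μ) (hgm : AEStronglyMeasurable g μ)
    (hf0 : 0 ≤ᵐ[μ] f) (hg0 : 0 ≤ᵐ[μ] g)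
    (hf2 : Integrable (fun x => f x ^ 2) μ) (hg2 : Integrable (fun x => g x ^ 2) μ) :
    ∫ x, f x * g x ∂μ ≤ Real.sqrt (∫ x, f x ^ 2 ∂μ) * Real.sqrt (∫ x, g x ^ 2 ∂μ) := by
  have hpq : Real.HolderConjugate 2 2 := by
    exact Real.HolderConjugate.two_two
  have hfmem : MemLp f (ENNReal.ofReal 2) μ := by
    rw [show ENNReal.ofReal 2 = 2 by norm_num]
    refine (memLp_two_iff_integrable_sq_norm hfm).mpr ?_
    simpa [sq_abs] using hf2
  have hgmem : MemLp g (ENNReal.ofReal 2) μ := by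
    rw [show ENNReal.ofReal 2 = 2 by norm_num]
    refine (memLp_two_iff_integrable_sq_norm hgm).mpr ?_
    simpa [sq_abs] using hg2
  have := MeasureTheory.integral_mul_le_Lp_mul_Lq_of_nonneg hpq hf0 hg0 hfmem hgmem
  calc ∫ x, f x * g x ∂μ ≤ (∫ a, f a ^ (2:ℝ) ∂μ) ^ (1/(2:ℝ)) * (∫ a, g a ^ (2:ℝ) ∂μ) ^ (1/(2:ℝ)) := this
    _ = Real.sqrt (∫ x, f x ^ 2 ∂μ) * Real.sqrt (∫ x, g x ^ 2 ∂μ) := by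
        rw [Real.sqrt_eq_rpow, Real.sqrt_eq_rpow]
        norm_num [Real.rpow_natCast]

open MeasureTheory Set Filter

private lemma hardy0 (δ : ℝ) (hδ : 0 < δ) (v : ℝ → ℂ)
    (hv : Differentiable ℝ v) (hv0 : v 0 = 0)
    (hloc : ∀ T : ℝ, IntegrableOn (fun x => ‖deriv v x‖) (Icc 0 T) volume)
    (hA : IntegrableOn (fun x => (1+x) ^ (-(3+δ)) * ‖v x‖^2) (Ioi 0) volume)
    (hB : IntegrableOn (fun x => (1+x) ^ (-(1+δ)) * ‖deriv v x‖^2) (Ioi 0) volume) :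
    (∫ x in Ioi (0:ℝ), (1+x) ^ (-(3+δ)) * ‖v x‖^2) ≤
      (2/(2+δ)) * (Real.sqrt (∫ x in Ioi (0:ℝ), (1+x) ^ (-(3+δ)) * ‖v x‖^2) *
        Real.sqrt (∫ x in Ioi (0:ℝ), (1+x) ^ (-(1+δ)) * ‖deriv v x‖^2)) := by
  have h2δ : (0:ℝ) < 2 + δ := by linarith
  set A : ℝ := ∫ x in Ioi (0:ℝ), (1+x) ^ (-(3+δ)) * ‖v x‖^2 with hAdef
  set B : ℝ := ∫ x in Ioi (0:ℝ), (1+x) ^ (-(1+δ)) * ‖deriv v x‖^2 with hBdef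
  -- pointwise derivative of h x = ‖v x‖^2
  have hvd : ∀ x : ℝ, HasDerivAt v (deriv v x) x := fun x => (hv x).hasDerivAt
  have hinner : ∀ x : ℝ, HasDerivAt (fun t => ‖v t‖^2)
      (2 * (inner ℝ (v x) (deriv v x) : ℝ)) x := by
    intro x
    have h1 := (HasDerivAt.inner ℝ (hvd x) (hvd x))
    have h2 : (inner ℝ (v x) (deriv v x) : ℝ) + (inner ℝ (deriv v x) (v x) : ℝ)
        = 2 * (inner ℝ (v x) (deriv v x) : ℝ) := by
      rw [real_inner_comm (deriv v x) (v x)]; ring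
    simp only [h2] at h1
    have hfe : (fun t => ‖v t‖^2) = fun t => (inner ℝ (v t) (v t) : ℝ) :=
      funext fun t => (real_inner_self_eq_norm_sq (v t)).symm
    rw [hfe]
    exact h1
  -- measurability
  have hmV : Continuous v := hv.continuous
  have hmD : Measurable (deriv v) := measurable_deriv v
  have hq_meas : Measurable (fun x => (inner ℝ (v x) (deriv v x) : ℝ)) :=
    hmV.measurable.inner hmD
  -- the half-weight functions
  set F₁ : ℝ → ℝ := fun x => (1+x) ^ (-(3+δ)/2) * ‖v x‖ with hF₁
  set F₂ : ℝ → ℝ := fun x => (1+x) ^ (-(1+δ)/2) * ‖deriv v x‖ with hF₂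
  have hF1sq : ∀ x ∈ Ioi (0:ℝ), F₁ x ^ 2 = (1+x) ^ (-(3+δ)) * ‖v x‖^2 := by
    intro x hx
    have hpos : (0:ℝ) < 1 + x := by simp at hx; linarith
    rw [hF₁, mul_pow, sq ((1+x) ^ (-(3+δ)/2)), ← Real.rpow_add hpos]
    ring_nf
  have hF2sq : ∀ x ∈ Ioi (0:ℝ), F₂ x ^ 2 = (1+x) ^ (-(1+δ)) * ‖deriv v x‖^2 := by
    intro x hx
    have hpos : (0:ℝ) < 1 + x := by simp at hx; linarith
    rw [hF₂, mul_pow, sq ((1+x) ^ (-(1+δ)/2)), ← Real.rpow_add hpos]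
    ring_nf
  have hF₁m : AEStronglyMeasurable F₁ (volume.restrict (Ioi (0:ℝ))) := by
    exact ((by fun_prop : Measurable fun x : ℝ => (1+x) ^ (-(3+δ)/2)).mul hmV.measurable.norm).aestronglyMeasurable
  have hF₂m : AEStronglyMeasurable F₂ (volume.restrict (Ioi (0:ℝ))) := by
    exact ((by fun_prop : Measurable fun x : ℝ => (1+x) ^ (-(1+δ)/2)).mul hmD.norm).aestronglyMeasurable
  have hF₁0 : 0 ≤ᵐ[volume.restrict (Ioi (0:ℝ))] F₁ := by
    filter_upwards [ae_restrict_mem measurableSet_Ioi] with x hx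
    have hpos : (0:ℝ) < 1 + x := by simp at hx; linarith
    exact mul_nonneg (Real.rpow_nonneg hpos.le _) (norm_nonneg _)
  have hF₂0 : 0 ≤ᵐ[volume.restrict (Ioi (0:ℝ))] F₂ := by
    filter_upwards [ae_restrict_mem measurableSet_Ioi] with x hx
    have hpos : (0:ℝ) < 1 + x := by simp at hx; linarith
    exact mul_nonneg (Real.rpow_nonneg hpos.le _) (norm_nonneg _)
  have hF₁2 : Integrable (fun x => F₁ x ^ 2) (volume.restrict (Ioi (0:ℝ))) := by
    refine hA.congr ?_
    filter_upwards [ae_restrict_mem measurableSet_Ioi] with x hx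
    exact (hF1sq x hx).symm
  have hF₂2 : Integrable (fun x => F₂ x ^ 2) (volume.restrict (Ioi (0:ℝ))) := by
    refine hB.congr ?_
    filter_upwards [ae_restrict_mem measurableSet_Ioi] with x hx
    exact (hF2sq x hx).symm
  -- Cauchy-Schwarz bound
  have hCS : (∫ x in Ioi (0:ℝ), F₁ x * F₂ x) ≤ Real.sqrt A * Real.sqrt B := by
    have h := myCS hF₁m hF₂m hF₁0 hF₂0 hF₁2 hF₂2
    have e1 : (∫ x in Ioi (0:ℝ), F₁ x ^ 2) = A :=
      setIntegral_congr_fun measurableSet_Ioi (fun x hx => hF1sq x hx)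
    have e2 : (∫ x in Ioi (0:ℝ), F₂ x ^ 2) = B :=
      setIntegral_congr_fun measurableSet_Ioi (fun x hx => hF2sq x hx)
    rwa [e1, e2] at h
  have hF₁F₂int : IntegrableOn (fun x => F₁ x * F₂ x) (Ioi (0:ℝ)) volume := by
    refine Integrable.mono' (hF₁2.add hF₂2) (hF₁m.mul hF₂m) ?_
    filter_upwards [hF₁0, hF₂0] with x h1 h2
    simp only [Pi.zero_apply] at h1 h2
    rw [Real.norm_of_nonneg (mul_nonneg h1 h2)]
    simp only [Pi.add_apply]
    nlinarith [sq_nonneg (F₁ x - F₂ x)]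
  -- the key estimate for each T ≥ 0
  have hkey : ∀ T : ℝ, 0 ≤ T →
      (2+δ) * (∫ x in (0:ℝ)..T, (1+x) ^ (-(3+δ)) * ‖v x‖^2)
        ≤ 2 * (Real.sqrt A * Real.sqrt B) := by
    intro T hT
    have huIcc : uIcc (0:ℝ) T = Icc 0 T := uIcc_of_le hT
    -- G and its derivative
    set p : ℝ → ℝ := fun x => (-(2+δ) * (1+x) ^ (-(3+δ))) * ‖v x‖^2 with hp
    set q : ℝ → ℝ := fun x => (1+x) ^ (-(2+δ)) * (2 * (inner ℝ (v x) (deriv v x) : ℝ)) with hq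
    have hG : ∀ x ∈ uIcc (0:ℝ) T, HasDerivAt (fun y => (1+y) ^ (-(2+δ)) * ‖v y‖^2)
        (p x + q x) x := by
      intro x hx
      rw [huIcc] at hx
      have hpos : (0:ℝ) < 1 + x := by linarith [hx.1]
      have hw : HasDerivAt (fun y : ℝ => (1+y)) 1 x := by
        simpa using (hasDerivAt_id x).const_add 1
      have hw2 := hw.rpow_const (p := -(2+δ)) (Or.inl (ne_of_gt hpos))
      have hexp : -(2+δ) - 1 = -(3+δ) := by ring
      rw [hexp] at hw2
      have := hw2.mul (hinner x)
      refine this.congr_deriv ?_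
      rw [hp, hq]; beta_reduce; ring
    -- integrability of p and q on [0,T]
    have hcont_w : ∀ (e : ℝ), ContinuousOn (fun x : ℝ => (1+x) ^ e) (Icc 0 T) := by
      intro e
      refine ContinuousOn.rpow_const (by fun_prop) ?_
      intro x hx
      exact Or.inl (by nlinarith [hx.1])
    have hpInt : IntervalIntegrable p volume 0 T := by
      refine ContinuousOn.intervalIntegrable ?_
      rw [huIcc]
      exact (((hcont_w _).const_smul (-(2+δ))).mul (hmV.norm.pow 2).continuousOn)
    have hqbound : ∀ x ∈ Icc (0:ℝ) T, |q x| ≤ 2 * (‖v x‖ * ‖deriv v x‖) := by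
      intro x hx
      have hpos : (0:ℝ) < 1 + x := by linarith [hx.1]
      have hw1 : (1+x) ^ (-(2+δ)) ≤ 1 :=
        Real.rpow_le_one_of_one_le_of_nonpos (by linarith [hx.1]) (by linarith)
      have hw0 : (0:ℝ) ≤ (1+x) ^ (-(2+δ)) := Real.rpow_nonneg hpos.le _
      rw [hq, abs_mul, abs_of_nonneg hw0, abs_mul]
      have hi := abs_real_inner_le_norm (v x) (deriv v x)
      calc (1+x) ^ (-(2+δ)) * (|(2:ℝ)| * |(inner ℝ (v x) (deriv v x) : ℝ)|)
          ≤ 1 * (2 * (‖v x‖ * ‖deriv v x‖)) := by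
            apply mul_le_mul hw1
            · rw [abs_of_nonneg (by norm_num : (0:ℝ) ≤ 2)]
              apply mul_le_mul_of_nonneg_left hi (by norm_num)
            · positivity
            · norm_num
        _ = 2 * (‖v x‖ * ‖deriv v x‖) := by ring
    have hgInt : IntegrableOn (fun x => 2 * (‖v x‖ * ‖deriv v x‖)) (Icc 0 T) volume := by
      have := IntegrableOn.continuousOn_mul
        (g := fun x => 2 * ‖v x‖) (g' := fun x => ‖deriv v x‖)
        (by fun_prop) (hloc T) isCompact_Icc
      refine this.congr_fun (fun x _ => by ring) measurableSet_Icc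
    have hqInt : IntervalIntegrable q volume 0 T := by
      refine (IntegrableOn.intervalIntegrable ?_)
      rw [huIcc]
      refine Integrable.mono' hgInt ?_ ?_
      · exact ((by fun_prop : Measurable fun x : ℝ => (1+x) ^ (-(2+δ))).mul
          (hq_meas.const_mul 2)).aestronglyMeasurable
      · filter_upwards [ae_restrict_mem measurableSet_Icc] with x hx
        exact (le_of_eq (Real.norm_eq_abs _)).trans (hqbound x hx)
    -- FTC
    have hFTC := intervalIntegral.integral_eq_sub_of_hasDerivAt hG (hpInt.add hqInt)
    have hzero : (1+(0:ℝ)) ^ (-(2+δ)) * ‖v 0‖^2 = 0 := by rw [hv0]; simp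
    rw [intervalIntegral.integral_add hpInt hqInt, hzero, sub_zero] at hFTC
    have hGT' : (0:ℝ) ≤ (1 + T) ^ (-(2+δ)) * ‖v T‖ ^ 2 := by
      have : (0:ℝ) < 1 + T := by linarith
      positivity
    -- rearrange : ∫ -p ≤ ∫ q
    have hstep1 : (∫ x in (0:ℝ)..T, (2+δ) * ((1+x) ^ (-(3+δ)) * ‖v x‖^2))
        ≤ ∫ x in (0:ℝ)..T, q x := by
      have hmp : (∫ x in (0:ℝ)..T, (2+δ) * ((1+x) ^ (-(3+δ)) * ‖v x‖^2))
          = - ∫ x in (0:ℝ)..T, p x := by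
        rw [← intervalIntegral.integral_neg]
        congr 1 with x
        rw [hp]; ring
      rw [hmp]
      linarith [hFTC, hGT']
    -- bound q by 2 F₁ F₂
    have hstep2 : (∫ x in (0:ℝ)..T, q x) ≤ ∫ x in (0:ℝ)..T, 2 * (F₁ x * F₂ x) := by
      refine intervalIntegral.integral_mono_on hT hqInt ?_ ?_
      · refine (IntegrableOn.intervalIntegrable ?_)
        rw [huIcc]
        have : IntegrableOn (fun x => (2 * ((1+x) ^ (-(3+δ)/2) * ‖v x‖ * (1+x) ^ (-(1+δ)/2)))
            * ‖deriv v x‖) (Icc 0 T) volume := by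
          refine IntegrableOn.continuousOn_mul ?_ (hloc T) isCompact_Icc
          exact continuous_const.continuousOn.mul
            (((hcont_w _).mul hmV.norm.continuousOn).mul (hcont_w _))
        refine this.congr_fun (fun x _ => ?_) measurableSet_Icc
        rw [hF₁, hF₂]; ring
      · intro x hx
        have hpos : (0:ℝ) < 1 + x := by linarith [hx.1]
        have hw0 : (0:ℝ) ≤ (1+x) ^ (-(2+δ)) := Real.rpow_nonneg hpos.le _
        have hsplit : (1+x) ^ (-(2+δ)) = (1+x) ^ (-(3+δ)/2) * (1+x) ^ (-(1+δ)/2) := by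
          rw [← Real.rpow_add hpos]; ring_nf
        have hi : (2 * (inner ℝ (v x) (deriv v x) : ℝ)) ≤ 2 * (‖v x‖ * ‖deriv v x‖) := by
          have := abs_real_inner_le_norm (v x) (deriv v x)
          have := le_abs_self (inner ℝ (v x) (deriv v x) : ℝ)
          linarith
        calc q x ≤ (1+x) ^ (-(2+δ)) * (2 * (‖v x‖ * ‖deriv v x‖)) :=
              mul_le_mul_of_nonneg_left hi hw0
          _ = 2 * (F₁ x * F₂ x) := by
              rw [hF₁, hF₂, hsplit]; ring
    -- combine
    have hstep3 : (∫ x in (0:ℝ)..T, 2 * (F₁ x * F₂ x)) ≤ 2 * (Real.sqrt A * Real.sqrt B) := by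
      rw [intervalIntegral.integral_const_mul]
      have heq : (∫ x in (0:ℝ)..T, F₁ x * F₂ x) = ∫ x in Ioc (0:ℝ) T, F₁ x * F₂ x :=
        intervalIntegral.integral_of_le hT
      have hmono : (∫ x in Ioc (0:ℝ) T, F₁ x * F₂ x) ≤ ∫ x in Ioi (0:ℝ), F₁ x * F₂ x := by
        refine setIntegral_mono_set hF₁F₂int ?_ (HasSubset.Subset.eventuallyLE Ioc_subset_Ioi_self)
        filter_upwards [hF₁0, hF₂0] with x h1 h2
        simp only [Pi.zero_apply] at h1 h2
        exact mul_nonneg h1 h2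
      rw [heq]
      have := hmono.trans hCS
      linarith
    have hconst : (2+δ) * (∫ x in (0:ℝ)..T, (1+x) ^ (-(3+δ)) * ‖v x‖^2)
        = ∫ x in (0:ℝ)..T, (2+δ) * ((1+x) ^ (-(3+δ)) * ‖v x‖^2) := by
      rw [intervalIntegral.integral_const_mul]
    rw [hconst]
    exact (hstep1.trans hstep2).trans hstep3
  -- take the limit T → ∞
  have htendA : Tendsto (fun T : ℝ => ∫ x in (0:ℝ)..T, (1+x) ^ (-(3+δ)) * ‖v x‖^2)
      atTop (nhds A) :=
    intervalIntegral_tendsto_integral_Ioi 0 hA tendsto_id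
  have htend : Tendsto (fun T : ℝ => (2+δ) * ∫ x in (0:ℝ)..T, (1+x) ^ (-(3+δ)) * ‖v x‖^2)
      atTop (nhds ((2+δ) * A)) := htendA.const_mul _
  have hlim : (2+δ) * A ≤ 2 * (Real.sqrt A * Real.sqrt B) := by
    refine le_of_tendsto htend ?_
    filter_upwards [eventually_ge_atTop (0:ℝ)] with T hT
    exact hkey T hT
  rw [show (2/(2+δ)) * (Real.sqrt A * Real.sqrt B)
      = (2 * (Real.sqrt A * Real.sqrt B))/(2+δ) by ring]
  rw [le_div_iff₀ h2δ]
  linarith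
private lemma minkowski_step {μ : Measure ℝ} {f g h : ℝ → ℝ}
    (hfm : AEStronglyMeasurable f μ) (hgm : AEStronglyMeasurable g μ)
    (hf0 : ∀ x, 0 ≤ f x) (hg0 : ∀ x, 0 ≤ g x) (hh0 : ∀ x, 0 ≤ h x)
    (hle : ∀ x, h x ≤ f x + g x)
    (hf2 : Integrable (fun x => f x ^ 2) μ) (hg2 : Integrable (fun x => g x ^ 2) μ)
    (hh2 : Integrable (fun x => h x ^ 2) μ) :
    Real.sqrt (∫ x, h x ^ 2 ∂μ) ≤
      Real.sqrt (∫ x, f x ^ 2 ∂μ) + Real.sqrt (∫ x, g x ^ 2 ∂μ) := by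
  have hsum12 : Integrable (fun x => f x ^ 2 + g x ^ 2) μ := by
    exact hf2.add hg2
  have hfg_int : Integrable (fun x => f x * g x) μ := by
    refine Integrable.mono' hsum12 (hfm.mul hgm) ?_
    filter_upwards with x
    rw [Real.norm_of_nonneg (mul_nonneg (hf0 x) (hg0 x))]
    nlinarith [sq_nonneg (f x - g x), hf0 x, hg0 x]
  have hCS : ∫ x, f x * g x ∂μ ≤
      Real.sqrt (∫ x, f x ^ 2 ∂μ) * Real.sqrt (∫ x, g x ^ 2 ∂μ) :=
    myCS hfm hgm (Filter.Eventually.of_forall hf0) (Filter.Eventually.of_forall hg0) hf2 hg2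
  have hmono : (∫ x, h x ^ 2 ∂μ) ≤ ∫ x, (f x ^ 2 + g x ^ 2 + 2 * (f x * g x)) ∂μ := by
    have hsum : Integrable (fun x => f x ^ 2 + g x ^ 2 + 2 * (f x * g x)) μ := by
      exact hsum12.add (hfg_int.const_mul 2)
    refine integral_mono hh2 hsum ?_
    intro x
    dsimp only
    nlinarith [hle x, hh0 x, hf0 x, hg0 x]
  have hsplit : (∫ x, (f x ^ 2 + g x ^ 2 + 2 * (f x * g x)) ∂μ)
      = (∫ x, f x ^ 2 ∂μ) + (∫ x, g x ^ 2 ∂μ) + 2 * ∫ x, f x * g x ∂μ := by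
    rw [integral_add hsum12 (hfg_int.const_mul 2), integral_add hf2 hg2,
      integral_const_mul]
  have hf2n : 0 ≤ ∫ x, f x ^ 2 ∂μ := integral_nonneg fun x => sq_nonneg _
  have hg2n : 0 ≤ ∫ x, g x ^ 2 ∂μ := integral_nonneg fun x => sq_nonneg _
  have hkey : (∫ x, h x ^ 2 ∂μ) ≤
      (Real.sqrt (∫ x, f x ^ 2 ∂μ) + Real.sqrt (∫ x, g x ^ 2 ∂μ)) ^ 2 := by
    have e1 : Real.sqrt (∫ x, f x ^ 2 ∂μ) ^ 2 = ∫ x, f x ^ 2 ∂μ := Real.sq_sqrt hf2n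
    have e2 : Real.sqrt (∫ x, g x ^ 2 ∂μ) ^ 2 = ∫ x, g x ^ 2 ∂μ := Real.sq_sqrt hg2n
    nlinarith [hmono, hsplit, hCS]
  calc Real.sqrt (∫ x, h x ^ 2 ∂μ)
      ≤ Real.sqrt ((Real.sqrt (∫ x, f x ^ 2 ∂μ) + Real.sqrt (∫ x, g x ^ 2 ∂μ)) ^ 2) :=
        Real.sqrt_le_sqrt hkey
    _ = Real.sqrt (∫ x, f x ^ 2 ∂μ) + Real.sqrt (∫ x, g x ^ 2 ∂μ) := by
        rw [Real.sqrt_sq (by positivity)]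


set_option maxHeartbeats 2000000 in
/-- Cut-off weighted Poincaré estimate (4.4): for δ > 0, x₀ ∈ ℝ, r > 0,
cutoffs χ₀, χ₁ ∈ C_c^∞(ℝ) with values in [0,1], χ₀ ≡ 1 on a neighborhood of
[x₀-r, x₀+r] and χ₁ ≡ 1 on supp χ₀, there is C > 0 such that for all
u ∈ H¹(ℝ,ℂ):
‖(1+|x-x₀|)^{-(3+δ)/2}u‖ ≤ (2/(2+δ))‖(1+|x-x₀|)^{-(1+δ)/2}u'‖ + C‖χ₁u‖. -/
theorem stmt11 (δ : ℝ) (hδ : 0 < δ) (x₀ r : ℝ) (hr : 0 < r)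
    (χ₀ χ₁ : ℝ → ℝ)
    (hχ₀ : ContDiff ℝ (⊤ : ℕ∞) χ₀) (hχ₀c : HasCompactSupport χ₀)
    (hχ₀r : ∀ x, χ₀ x ∈ Icc (0 : ℝ) 1)
    (hχ₀1 : ∃ s : Set ℝ, IsOpen s ∧ Icc (x₀ - r) (x₀ + r) ⊆ s ∧ EqOn χ₀ 1 s)
    (hχ₁ : ContDiff ℝ (⊤ : ℕ∞) χ₁) (hχ₁c : HasCompactSupport χ₁)
    (hχ₁r : ∀ x, χ₁ x ∈ Icc (0 : ℝ) 1)
    (hχ₁1 : EqOn χ₁ 1 (tsupport χ₀)) :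
    ∃ C > 0, ∀ u : ℝ → ℂ, Differentiable ℝ u →
      MemLp u 2 (volume : Measure ℝ) →
      MemLp (deriv u) 2 (volume : Measure ℝ) →
      Real.sqrt (∫ x : ℝ, (1 + |x - x₀|) ^ (-(3 + δ)) * ‖u x‖ ^ 2)
        ≤ (2 / (2 + δ)) *
            Real.sqrt (∫ x : ℝ, (1 + |x - x₀|) ^ (-(1 + δ)) * ‖deriv u x‖ ^ 2)
          + C * Real.sqrt (∫ x : ℝ, (χ₁ x) ^ 2 * ‖u x‖ ^ 2) := by
  obtain ⟨s, hs_open, hs_sub, hs_eq⟩ := hχ₀1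
  have h2δ : (0:ℝ) < 2 + δ := by linarith
  obtain ⟨M₀, hM₀⟩ := (hχ₀c.deriv).exists_bound_of_continuous (hχ₀.continuous_deriv (by simp))
  set M : ℝ := max M₀ 0 with hMdef
  have hM0 : 0 ≤ M := le_max_right _ _
  have hMb : ∀ x, |deriv χ₀ x| ≤ M := fun x =>
    le_trans (by simpa using hM₀ x) (le_max_left _ _)
  refine ⟨2/(2+δ) * M + 1, by positivity, ?_⟩
  intro u hu hu2 hu'2
  have hχd : Differentiable ℝ χ₀ := hχ₀.differentiable (by simp)
  set v : ℝ → ℂ := fun x => (1 - χ₀ x) • u x with hv_def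
  have hvdiff : Differentiable ℝ v :=
    ((differentiable_const (1:ℝ)).sub hχd).smul hu
  have hvHasD : ∀ x, HasDerivAt v
      ((1 - χ₀ x) • deriv u x + (-(deriv χ₀ x)) • u x) x := fun x =>
    (((hχd x).hasDerivAt.const_sub 1).smul (hu x).hasDerivAt)
  have hvderiv : deriv v = fun x => (1 - χ₀ x) • deriv u x + (-(deriv χ₀ x)) • u x :=
    funext fun x => (hvHasD x).deriv
  have hvx₀ : v x₀ = 0 := by
    have h1 : χ₀ x₀ = 1 := hs_eq (hs_sub ⟨by linarith, by linarith⟩)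
    rw [hv_def]; dsimp only; rw [h1]; simp
  -- pointwise bounds
  have hχ₁0 : ∀ x, 0 ≤ χ₁ x := fun x => (hχ₁r x).1
  have habs1 : ∀ x, ‖(1 - χ₀ x : ℝ)‖ ≤ 1 := by
    intro x
    rw [Real.norm_eq_abs, abs_le]
    exact ⟨by linarith [(hχ₀r x).2], by linarith [(hχ₀r x).1]⟩
  have hv_le : ∀ x, ‖v x‖ ≤ ‖u x‖ := by
    intro x
    rw [hv_def]; dsimp only; rw [norm_smul]
    calc ‖(1 - χ₀ x : ℝ)‖ * ‖u x‖ ≤ 1 * ‖u x‖ :=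
          mul_le_mul_of_nonneg_right (habs1 x) (norm_nonneg _)
      _ = ‖u x‖ := one_mul _
  have hχule : ∀ x, χ₀ x * ‖u x‖ ≤ χ₁ x * ‖u x‖ := by
    intro x
    by_cases hx : x ∈ Function.support χ₀
    · have h1 : χ₁ x = 1 := hχ₁1 (subset_tsupport _ hx)
      rw [h1, one_mul]
      calc χ₀ x * ‖u x‖ ≤ 1 * ‖u x‖ :=
            mul_le_mul_of_nonneg_right (hχ₀r x).2 (norm_nonneg _)
        _ = ‖u x‖ := one_mul _
    · rw [Function.notMem_support.mp hx, zero_mul]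
      exact mul_nonneg (hχ₁0 x) (norm_nonneg _)
  have hv'_le : ∀ x, ‖deriv v x‖ ≤ ‖deriv u x‖ + M * (χ₁ x * ‖u x‖) := by
    intro x
    rw [hvderiv]; dsimp only
    refine (norm_add_le _ _).trans ?_
    rw [norm_smul, norm_smul]
    have h2 : ‖(-(deriv χ₀ x) : ℝ)‖ * ‖u x‖ ≤ M * (χ₁ x * ‖u x‖) := by
      rw [norm_neg, Real.norm_eq_abs]
      by_cases hx : x ∈ Function.support (deriv χ₀)
      · have hxt : x ∈ tsupport χ₀ := support_deriv_subset hx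
        have h1 : χ₁ x = 1 := hχ₁1 hxt
        rw [h1]
        calc |deriv χ₀ x| * ‖u x‖ ≤ M * ‖u x‖ :=
              mul_le_mul_of_nonneg_right (hMb x) (norm_nonneg _)
          _ = M * (1 * ‖u x‖) := by ring
      · rw [Function.notMem_support.mp hx, abs_zero, zero_mul]
        exact mul_nonneg hM0 (mul_nonneg (hχ₁0 x) (norm_nonneg _))
    calc ‖(1 - χ₀ x : ℝ)‖ * ‖deriv u x‖ + ‖(-(deriv χ₀ x) : ℝ)‖ * ‖u x‖
        ≤ 1 * ‖deriv u x‖ + M * (χ₁ x * ‖u x‖) :=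
          add_le_add (mul_le_mul_of_nonneg_right (habs1 x) (norm_nonneg _)) h2
      _ = ‖deriv u x‖ + M * (χ₁ x * ‖u x‖) := by ring
  -- weight facts
  have hbpos : ∀ x : ℝ, (0:ℝ) < 1 + |x - x₀| := fun x => by positivity
  have hb1 : ∀ x : ℝ, (1:ℝ) ≤ 1 + |x - x₀| := fun x => le_add_of_nonneg_right (abs_nonneg _)
  have hwcont : ∀ e : ℝ, Continuous (fun x : ℝ => (1 + |x - x₀|) ^ e) := fun e =>
    (continuous_const.add (continuous_id.sub continuous_const).abs).rpow_const
      (fun x => Or.inl (ne_of_gt (hbpos x)))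
  have hwle1 : ∀ e : ℝ, e ≤ 0 → ∀ x, (1 + |x - x₀|) ^ e ≤ 1 := fun e he x =>
    Real.rpow_le_one_of_one_le_of_nonpos (hb1 x) he
  have hwnn : ∀ e : ℝ, ∀ x, 0 ≤ (1 + |x - x₀|) ^ e := fun e x =>
    Real.rpow_nonneg (hbpos x).le e
  have hwsq3 : ∀ x : ℝ, ((1 + |x - x₀|) ^ (-(3+δ)/2)) ^ 2 = (1 + |x - x₀|) ^ (-(3+δ)) := by
    intro x
    rw [sq, ← Real.rpow_add (hbpos x)]
    ring_nf
  have hwsq1 : ∀ x : ℝ, ((1 + |x - x₀|) ^ (-(1+δ)/2)) ^ 2 = (1 + |x - x₀|) ^ (-(1+δ)) := by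
    intro x
    rw [sq, ← Real.rpow_add (hbpos x)]
    ring_nf
  -- integrability
  have humeas : AEStronglyMeasurable u volume := hu2.aestronglyMeasurable
  have hu'meas : AEStronglyMeasurable (deriv u) volume := hu'2.aestronglyMeasurable
  have hvcont : Continuous v := hvdiff.continuous
  have hv'meas : Measurable (deriv v) := measurable_deriv v
  have hU2 : Integrable (fun x => ‖u x‖^2) volume :=
    (memLp_two_iff_integrable_sq_norm humeas).mp hu2
  have hU'2 : Integrable (fun x => ‖deriv u x‖^2) volume :=
    (memLp_two_iff_integrable_sq_norm hu'meas).mp hu'2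
  have hdom : ∀ (e : ℝ), e ≤ 0 → ∀ (w : ℝ → ℂ), AEStronglyMeasurable w volume →
      Integrable (fun x => ‖w x‖^2) volume →
      Integrable (fun x => (1 + |x - x₀|) ^ e * ‖w x‖^2) volume := by
    intro e he w hwm hw2
    refine Integrable.mono' hw2 ((hwcont e).aestronglyMeasurable.mul hw2.aestronglyMeasurable) ?_
    filter_upwards with x
    rw [Real.norm_eq_abs, abs_mul, abs_of_nonneg (hwnn e x),
      abs_of_nonneg (pow_nonneg (norm_nonneg (w x)) 2)]
    calc (1 + |x - x₀|) ^ e * ‖w x‖^2 ≤ 1 * ‖w x‖^2 :=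
          mul_le_mul_of_nonneg_right (hwle1 e he x) (pow_nonneg (norm_nonneg (w x)) 2)
      _ = ‖w x‖^2 := one_mul _
  have hV2 : Integrable (fun x => ‖v x‖^2) volume := by
    refine Integrable.mono' hU2 ((hvcont.norm.pow 2).aestronglyMeasurable) ?_
    filter_upwards with x
    rw [Real.norm_eq_abs, abs_of_nonneg (pow_nonneg (norm_nonneg (v x)) 2)]
    exact pow_le_pow_left₀ (norm_nonneg _) (hv_le x) 2
  have hV'2 : Integrable (fun x => ‖deriv v x‖^2) volume := by
    have hdomf : Integrable (fun x => 2*‖deriv u x‖^2 + 2*M^2*‖u x‖^2) volume := by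
      exact (hU'2.const_mul 2).add (hU2.const_mul (2*M^2))
    refine Integrable.mono' hdomf (hv'meas.norm.pow_const 2).aestronglyMeasurable ?_
    filter_upwards with x
    rw [Real.norm_eq_abs, abs_of_nonneg (pow_nonneg (norm_nonneg (deriv v x)) 2)]
    have h2 : χ₁ x * ‖u x‖ ≤ 1 * ‖u x‖ :=
      mul_le_mul_of_nonneg_right (hχ₁r x).2 (norm_nonneg _)
    have h2' : M * (χ₁ x * ‖u x‖) ≤ M * (1 * ‖u x‖) := mul_le_mul_of_nonneg_left h2 hM0
    have h3 : ‖deriv v x‖ ≤ ‖deriv u x‖ + M * ‖u x‖ := by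
      linarith [hv'_le x]
    have h4 : ‖deriv v x‖^2 ≤ (‖deriv u x‖ + M * ‖u x‖)^2 :=
      pow_le_pow_left₀ (norm_nonneg _) h3 2
    nlinarith [sq_nonneg (‖deriv u x‖ - M * ‖u x‖)]
  have hPint : Integrable (fun x => (1 + |x - x₀|) ^ (-(3+δ)) * ‖u x‖^2) volume :=
    hdom _ (by linarith) u humeas hU2
  have hQint : Integrable (fun x => (1 + |x - x₀|) ^ (-(1+δ)) * ‖deriv u x‖^2) volume :=
    hdom _ (by linarith) (deriv u) hu'meas hU'2
  have hAint : Integrable (fun x => (1 + |x - x₀|) ^ (-(3+δ)) * ‖v x‖^2) volume :=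
    hdom _ (by linarith) v hvcont.aestronglyMeasurable hV2
  have hBint : Integrable (fun x => (1 + |x - x₀|) ^ (-(1+δ)) * ‖deriv v x‖^2) volume :=
    hdom _ (by linarith) (deriv v) hv'meas.aestronglyMeasurable hV'2
  have hRint : Integrable (fun x => (χ₁ x)^2 * ‖u x‖^2) volume := by
    refine Integrable.mono' hU2
      (((hχ₁.continuous.pow 2).aestronglyMeasurable).mul hU2.aestronglyMeasurable) ?_
    filter_upwards with x
    rw [Real.norm_eq_abs,
      abs_of_nonneg (mul_nonneg (sq_nonneg (χ₁ x)) (pow_nonneg (norm_nonneg (u x)) 2))]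
    have hc1 : χ₁ x ^ 2 ≤ 1 := by nlinarith [(hχ₁r x).1, (hχ₁r x).2]
    calc χ₁ x ^ 2 * ‖u x‖^2 ≤ 1 * ‖u x‖^2 :=
          mul_le_mul_of_nonneg_right hc1 (pow_nonneg (norm_nonneg (u x)) 2)
      _ = ‖u x‖^2 := one_mul _
  -- local integrability of deriv v
  have hlocv : ∀ a b : ℝ, IntegrableOn (fun x => ‖deriv v x‖) (Icc a b) volume := by
    intro a b
    have hu'loc : IntegrableOn (deriv u) (Icc a b) volume :=
      (hu'2.locallyIntegrable (by norm_num)).integrableOn_isCompact isCompact_Icc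
    have hdomf : IntegrableOn (fun x => ‖deriv u x‖ + M * ‖u x‖) (Icc a b) volume :=
      hu'loc.norm.add ((hu.continuous.norm.integrableOn_Icc).const_mul M)
    refine Integrable.mono' hdomf (hv'meas.norm.aestronglyMeasurable) ?_
    filter_upwards with x
    rw [Real.norm_eq_abs, abs_of_nonneg (norm_nonneg _)]
    have h2 : χ₁ x * ‖u x‖ ≤ 1 * ‖u x‖ :=
      mul_le_mul_of_nonneg_right (hχ₁r x).2 (norm_nonneg _)
    have h2' : M * (χ₁ x * ‖u x‖) ≤ M * (1 * ‖u x‖) := mul_le_mul_of_nonneg_left h2 hM0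
    linarith [hv'_le x]
  -- translated function for the right half-line
  set v₁ : ℝ → ℂ := fun y => v (y + x₀) with hv₁_def
  have hv₁diff : Differentiable ℝ v₁ := hvdiff.comp (differentiable_id.add_const x₀)
  have hv₁0 : v₁ 0 = 0 := by rw [hv₁_def]; dsimp only; rw [zero_add]; exact hvx₀
  have hv₁deriv : ∀ y, deriv v₁ y = deriv v (y + x₀) := by
    intro y
    have h1 : HasDerivAt v₁ ((1:ℝ) • deriv v (y + x₀)) y := by
      have h0 := HasDerivAt.scomp (𝕜 := ℝ) y ((hvdiff (y + x₀)).hasDerivAt)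
        ((hasDerivAt_id y).add_const x₀)
      exact h0
    rw [h1.deriv, one_smul]
  have hMPr : MeasurePreserving (fun y : ℝ => y + x₀) volume volume :=
    measurePreserving_add_right volume x₀
  have hEmbr : MeasurableEmbedding (fun y : ℝ => y + x₀) :=
    (MeasurableEquiv.addRight x₀).measurableEmbedding
  have hpreR : (fun y : ℝ => y + x₀) ⁻¹' (Ioi x₀) = Ioi 0 := by
    ext y
    simp only [Set.mem_preimage, Set.mem_Ioi]
    constructor <;> intro h <;> linarith
  have hpreRicc : ∀ T:ℝ, (fun y : ℝ => y + x₀) ⁻¹' (Icc x₀ (T + x₀)) = Icc 0 T := by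
    intro T
    ext y
    simp only [Set.mem_preimage, Set.mem_Icc]
    constructor <;> intro h <;> exact ⟨by linarith [h.1], by linarith [h.2]⟩
  -- reflected function for the left half-line
  set v₂ : ℝ → ℂ := fun y => v (x₀ - y) with hv₂_def
  have hv₂diff : Differentiable ℝ v₂ := hvdiff.comp ((differentiable_const x₀).sub differentiable_id)
  have hv₂0 : v₂ 0 = 0 := by rw [hv₂_def]; dsimp only; rw [sub_zero]; exact hvx₀
  have hv₂deriv : ∀ y, ‖deriv v₂ y‖ = ‖deriv v (x₀ - y)‖ := by
    intro y
    have h1 : HasDerivAt v₂ ((-1:ℝ) • deriv v (x₀ - y)) y := by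
      have h0 := HasDerivAt.scomp (𝕜 := ℝ) y ((hvdiff (x₀ - y)).hasDerivAt)
        ((hasDerivAt_id y).const_sub x₀)
      exact h0
    rw [h1.deriv]
    simp
  have hMPl : MeasurePreserving (fun y : ℝ => x₀ - y) volume volume := by
    have h1 : MeasurePreserving ((fun y : ℝ => y + x₀) ∘ (fun y : ℝ => -y)) volume volume :=
      hMPr.comp (Measure.measurePreserving_neg volume)
    have h2 : ((fun y : ℝ => y + x₀) ∘ (fun y : ℝ => -y)) = (fun y : ℝ => x₀ - y) := by
      funext y; simp [Function.comp, sub_eq_neg_add]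
    rwa [h2] at h1
  have hEmbl : MeasurableEmbedding (fun y : ℝ => x₀ - y) := by
    have h1 := ((MeasurableEquiv.neg ℝ).trans (MeasurableEquiv.addRight x₀)).measurableEmbedding
    have h2 : ⇑((MeasurableEquiv.neg ℝ).trans (MeasurableEquiv.addRight x₀))
        = fun y : ℝ => x₀ - y := by
      funext y
      simp [MeasurableEquiv.trans, sub_eq_neg_add]
    rwa [h2] at h1
  have hpreL : (fun y : ℝ => x₀ - y) ⁻¹' (Iio x₀) = Ioi 0 := by
    ext y
    simp only [Set.mem_preimage, Set.mem_Iio, Set.mem_Ioi]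
    constructor <;> intro h <;> linarith
  have hpreLicc : ∀ T:ℝ, (fun y : ℝ => x₀ - y) ⁻¹' (Icc (x₀ - T) x₀) = Icc 0 T := by
    intro T
    ext y
    simp only [Set.mem_preimage, Set.mem_Icc]
    constructor <;> intro h <;> exact ⟨by linarith [h.1, h.2], by linarith [h.1, h.2]⟩
  -- transported set integrals (right)
  have hArEq : (∫ y in Ioi (0:ℝ), (1+y) ^ (-(3+δ)) * ‖v₁ y‖^2)
      = ∫ x in Ioi x₀, (1 + |x - x₀|) ^ (-(3+δ)) * ‖v x‖^2 := by
    have h1 := hMPr.setIntegral_preimage_emb hEmbr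
      (fun x => (1 + |x - x₀|) ^ (-(3+δ)) * ‖v x‖^2) (Ioi x₀)
    rw [hpreR] at h1
    rw [← h1]
    refine setIntegral_congr_fun measurableSet_Ioi (fun y hy => ?_)
    have hy' : (0:ℝ) < y := hy
    rw [hv₁_def]
    dsimp only
    rw [add_sub_cancel_right, abs_of_pos hy']
  have hBrEq : (∫ y in Ioi (0:ℝ), (1+y) ^ (-(1+δ)) * ‖deriv v₁ y‖^2)
      = ∫ x in Ioi x₀, (1 + |x - x₀|) ^ (-(1+δ)) * ‖deriv v x‖^2 := by
    have h1 := hMPr.setIntegral_preimage_emb hEmbr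
      (fun x => (1 + |x - x₀|) ^ (-(1+δ)) * ‖deriv v x‖^2) (Ioi x₀)
    rw [hpreR] at h1
    rw [← h1]
    refine setIntegral_congr_fun measurableSet_Ioi (fun y hy => ?_)
    have hy' : (0:ℝ) < y := hy
    rw [hv₁deriv y, add_sub_cancel_right, abs_of_pos hy']
  have hAlEq : (∫ y in Ioi (0:ℝ), (1+y) ^ (-(3+δ)) * ‖v₂ y‖^2)
      = ∫ x in Iio x₀, (1 + |x - x₀|) ^ (-(3+δ)) * ‖v x‖^2 := by
    have h1 := hMPl.setIntegral_preimage_emb hEmbl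
      (fun x => (1 + |x - x₀|) ^ (-(3+δ)) * ‖v x‖^2) (Iio x₀)
    rw [hpreL] at h1
    rw [← h1]
    refine setIntegral_congr_fun measurableSet_Ioi (fun y hy => ?_)
    have hy' : (0:ℝ) < y := hy
    rw [hv₂_def]
    dsimp only
    rw [show x₀ - y - x₀ = -y by ring, abs_neg, abs_of_pos hy']
  have hBlEq : (∫ y in Ioi (0:ℝ), (1+y) ^ (-(1+δ)) * ‖deriv v₂ y‖^2)
      = ∫ x in Iio x₀, (1 + |x - x₀|) ^ (-(1+δ)) * ‖deriv v x‖^2 := by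
    have h1 := hMPl.setIntegral_preimage_emb hEmbl
      (fun x => (1 + |x - x₀|) ^ (-(1+δ)) * ‖deriv v x‖^2) (Iio x₀)
    rw [hpreL] at h1
    rw [← h1]
    refine setIntegral_congr_fun measurableSet_Ioi (fun y hy => ?_)
    have hy' : (0:ℝ) < y := hy
    rw [hv₂deriv y, show x₀ - y - x₀ = -y by ring, abs_neg, abs_of_pos hy']
  -- transported integrability (right)
  have hAr_int : IntegrableOn (fun y => (1+y) ^ (-(3+δ)) * ‖v₁ y‖^2) (Ioi 0) volume := by
    have h1 := (hMPr.integrableOn_comp_preimage hEmbr).mpr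
      (hAint.integrableOn : IntegrableOn _ (Ioi x₀) volume)
    rw [hpreR] at h1
    refine h1.congr_fun (fun y hy => ?_) measurableSet_Ioi
    have hy' : (0:ℝ) < y := hy
    rw [hv₁_def]
    simp only [Function.comp]
    rw [add_sub_cancel_right, abs_of_pos hy']
  have hBr_int : IntegrableOn (fun y => (1+y) ^ (-(1+δ)) * ‖deriv v₁ y‖^2) (Ioi 0) volume := by
    have h1 := (hMPr.integrableOn_comp_preimage hEmbr).mpr
      (hBint.integrableOn : IntegrableOn _ (Ioi x₀) volume)
    rw [hpreR] at h1
    refine h1.congr_fun (fun y hy => ?_) measurableSet_Ioi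
    have hy' : (0:ℝ) < y := hy
    rw [hv₁deriv y]
    simp only [Function.comp]
    rw [add_sub_cancel_right, abs_of_pos hy']
  have hAl_int : IntegrableOn (fun y => (1+y) ^ (-(3+δ)) * ‖v₂ y‖^2) (Ioi 0) volume := by
    have h1 := (hMPl.integrableOn_comp_preimage hEmbl).mpr
      (hAint.integrableOn : IntegrableOn _ (Iio x₀) volume)
    rw [hpreL] at h1
    refine h1.congr_fun (fun y hy => ?_) measurableSet_Ioi
    have hy' : (0:ℝ) < y := hy
    rw [hv₂_def]
    simp only [Function.comp]
    rw [show x₀ - y - x₀ = -y by ring, abs_neg, abs_of_pos hy']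
  have hBl_int : IntegrableOn (fun y => (1+y) ^ (-(1+δ)) * ‖deriv v₂ y‖^2) (Ioi 0) volume := by
    have h1 := (hMPl.integrableOn_comp_preimage hEmbl).mpr
      (hBint.integrableOn : IntegrableOn _ (Iio x₀) volume)
    rw [hpreL] at h1
    refine h1.congr_fun (fun y hy => ?_) measurableSet_Ioi
    have hy' : (0:ℝ) < y := hy
    rw [hv₂deriv y]
    simp only [Function.comp]
    rw [show x₀ - y - x₀ = -y by ring, abs_neg, abs_of_pos hy']
  -- local integrability transported
  have hlocv₁ : ∀ T : ℝ, IntegrableOn (fun y => ‖deriv v₁ y‖) (Icc 0 T) volume := by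
    intro T
    have h1 := (hMPr.integrableOn_comp_preimage hEmbr).mpr (hlocv x₀ (T + x₀))
    rw [hpreRicc T] at h1
    refine h1.congr_fun (fun y _ => ?_) measurableSet_Icc
    simp only [Function.comp]
    rw [hv₁deriv y]
  have hlocv₂ : ∀ T : ℝ, IntegrableOn (fun y => ‖deriv v₂ y‖) (Icc 0 T) volume := by
    intro T
    have h1 := (hMPl.integrableOn_comp_preimage hEmbl).mpr (hlocv (x₀ - T) x₀)
    rw [hpreLicc T] at h1
    refine h1.congr_fun (fun y _ => ?_) measurableSet_Icc
    simp only [Function.comp]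
    rw [hv₂deriv y]
  -- apply the Hardy inequality on each half-line
  have hHr := hardy0 δ hδ v₁ hv₁diff hv₁0 hlocv₁ hAr_int hBr_int
  have hHl := hardy0 δ hδ v₂ hv₂diff hv₂0 hlocv₂ hAl_int hBl_int
  rw [hArEq, hBrEq] at hHr
  rw [hAlEq, hBlEq] at hHl
  -- name the six integrals
  set Ar : ℝ := ∫ x in Ioi x₀, (1 + |x - x₀|) ^ (-(3+δ)) * ‖v x‖^2 with hArdef
  set Al : ℝ := ∫ x in Iio x₀, (1 + |x - x₀|) ^ (-(3+δ)) * ‖v x‖^2 with hAldef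
  set Br : ℝ := ∫ x in Ioi x₀, (1 + |x - x₀|) ^ (-(1+δ)) * ‖deriv v x‖^2 with hBrdef
  set Bl : ℝ := ∫ x in Iio x₀, (1 + |x - x₀|) ^ (-(1+δ)) * ‖deriv v x‖^2 with hBldef
  set A : ℝ := ∫ x : ℝ, (1 + |x - x₀|) ^ (-(3+δ)) * ‖v x‖^2 with hAdef
  set B : ℝ := ∫ x : ℝ, (1 + |x - x₀|) ^ (-(1+δ)) * ‖deriv v x‖^2 with hBdef
  have hAsplit : Al + Ar = A := by
    rw [hAldef, hArdef, hAdef, ← integral_Iic_eq_integral_Iio]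
    exact intervalIntegral.integral_Iic_add_Ioi hAint.integrableOn hAint.integrableOn
  have hBsplit : Bl + Br = B := by
    rw [hBldef, hBrdef, hBdef, ← integral_Iic_eq_integral_Iio]
    exact intervalIntegral.integral_Iic_add_Ioi hBint.integrableOn hBint.integrableOn
  have hAr0 : 0 ≤ Ar := setIntegral_nonneg measurableSet_Ioi
    (fun x _ => mul_nonneg (hwnn _ x) (pow_nonneg (norm_nonneg _) 2))
  have hAl0 : 0 ≤ Al := setIntegral_nonneg measurableSet_Iio
    (fun x _ => mul_nonneg (hwnn _ x) (pow_nonneg (norm_nonneg _) 2))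
  have hBr0 : 0 ≤ Br := setIntegral_nonneg measurableSet_Ioi
    (fun x _ => mul_nonneg (hwnn _ x) (pow_nonneg (norm_nonneg _) 2))
  have hBl0 : 0 ≤ Bl := setIntegral_nonneg measurableSet_Iio
    (fun x _ => mul_nonneg (hwnn _ x) (pow_nonneg (norm_nonneg _) 2))
  have hA0 : 0 ≤ A := by rw [← hAsplit]; exact add_nonneg hAl0 hAr0
  have hc0 : (0:ℝ) ≤ 2/(2+δ) := by positivity
  have hABle : A ≤ (2/(2+δ)) * (Real.sqrt A * Real.sqrt B) := by
    calc A = Al + Ar := hAsplit.symm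
      _ ≤ (2/(2+δ)) * (Real.sqrt Al * Real.sqrt Bl)
          + (2/(2+δ)) * (Real.sqrt Ar * Real.sqrt Br) := add_le_add hHl hHr
      _ = (2/(2+δ)) * (Real.sqrt Al * Real.sqrt Bl + Real.sqrt Ar * Real.sqrt Br) := by ring
      _ ≤ (2/(2+δ)) * (Real.sqrt (Al + Ar) * Real.sqrt (Bl + Br)) :=
          mul_le_mul_of_nonneg_left (sqrt_cs2 hAl0 hBl0 hAr0 hBr0) hc0
      _ = (2/(2+δ)) * (Real.sqrt A * Real.sqrt B) := by rw [hAsplit, hBsplit]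
  have hsqA : Real.sqrt A ≤ (2/(2+δ)) * Real.sqrt B := by
    rcases eq_or_lt_of_le hA0 with h0 | hpos
    · rw [← h0, Real.sqrt_zero]
      positivity
    · have h1 : Real.sqrt A * Real.sqrt A ≤ ((2/(2+δ)) * Real.sqrt B) * Real.sqrt A := by
        rw [Real.mul_self_sqrt hA0]
        calc A ≤ (2/(2+δ)) * (Real.sqrt A * Real.sqrt B) := hABle
          _ = ((2/(2+δ)) * Real.sqrt B) * Real.sqrt A := by ring
      exact le_of_mul_le_mul_right h1 (Real.sqrt_pos.mpr hpos)
  -- Minkowski step 1 : √P ≤ √A + √R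
  have hstep1 : Real.sqrt (∫ x : ℝ, (1 + |x - x₀|) ^ (-(3+δ)) * ‖u x‖^2)
      ≤ Real.sqrt A + Real.sqrt (∫ x : ℝ, (χ₁ x)^2 * ‖u x‖^2) := by
    have hle : ∀ x, (1 + |x - x₀|) ^ (-(3+δ)/2) * ‖u x‖
        ≤ (1 + |x - x₀|) ^ (-(3+δ)/2) * ‖v x‖ + χ₁ x * ‖u x‖ := by
      intro x
      have hu_eq : u x = v x + χ₀ x • u x := by
        rw [hv_def]; dsimp only; rw [← add_smul]; simp
      have hn : ‖u x‖ ≤ ‖v x‖ + χ₀ x * ‖u x‖ := by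
        have h5 : ‖χ₀ x • u x‖ = χ₀ x * ‖u x‖ := by
          rw [norm_smul, Real.norm_eq_abs, abs_of_nonneg (hχ₀r x).1]
        calc ‖u x‖ = ‖v x + χ₀ x • u x‖ := by rw [← hu_eq]
          _ ≤ ‖v x‖ + ‖χ₀ x • u x‖ := norm_add_le _ _
          _ = ‖v x‖ + χ₀ x * ‖u x‖ := by rw [h5]
      have hw1 : (1 + |x - x₀|) ^ (-(3+δ)/2) ≤ 1 := hwle1 _ (by linarith) x
      have hw0 : 0 ≤ (1 + |x - x₀|) ^ (-(3+δ)/2) := hwnn _ x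
      have h2 : (1 + |x - x₀|) ^ (-(3+δ)/2) * ‖u x‖
          ≤ (1 + |x - x₀|) ^ (-(3+δ)/2) * (‖v x‖ + χ₀ x * ‖u x‖) :=
        mul_le_mul_of_nonneg_left hn hw0
      have h3 : (1 + |x - x₀|) ^ (-(3+δ)/2) * (χ₀ x * ‖u x‖) ≤ 1 * (χ₀ x * ‖u x‖) :=
        mul_le_mul_of_nonneg_right hw1 (mul_nonneg (hχ₀r x).1 (norm_nonneg _))
      have h4 := hχule x
      nlinarith [h2, h3]
    have hmk := minkowski_step (μ := volume)
      (f := fun x => (1 + |x - x₀|) ^ (-(3+δ)/2) * ‖v x‖)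
      (g := fun x => χ₁ x * ‖u x‖)
      (h := fun x => (1 + |x - x₀|) ^ (-(3+δ)/2) * ‖u x‖)
      (((hwcont _).mul hvcont.norm).aestronglyMeasurable)
      (hχ₁.continuous.aestronglyMeasurable.mul humeas.norm)
      (fun x => mul_nonneg (hwnn _ x) (norm_nonneg _))
      (fun x => mul_nonneg (hχ₁0 x) (norm_nonneg _))
      (fun x => mul_nonneg (hwnn _ x) (norm_nonneg _))
      hle
      (by
        have he : (fun x => ((1 + |x - x₀|) ^ (-(3+δ)/2) * ‖v x‖)^2)
            = fun x => (1 + |x - x₀|) ^ (-(3+δ)) * ‖v x‖^2 :=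
          funext fun x => by rw [mul_pow, hwsq3 x]
        rw [he]; exact hAint)
      (by
        have he : (fun x => (χ₁ x * ‖u x‖)^2) = fun x => (χ₁ x)^2 * ‖u x‖^2 :=
          funext fun x => by rw [mul_pow]
        rw [he]; exact hRint)
      (by
        have he : (fun x => ((1 + |x - x₀|) ^ (-(3+δ)/2) * ‖u x‖)^2)
            = fun x => (1 + |x - x₀|) ^ (-(3+δ)) * ‖u x‖^2 :=
          funext fun x => by rw [mul_pow, hwsq3 x]
        rw [he]; exact hPint)
    have e1 : (∫ x : ℝ, ((1 + |x - x₀|) ^ (-(3+δ)/2) * ‖u x‖)^2)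
        = ∫ x : ℝ, (1 + |x - x₀|) ^ (-(3+δ)) * ‖u x‖^2 := by
      congr 1; funext x; rw [mul_pow, hwsq3 x]
    have e2 : (∫ x : ℝ, ((1 + |x - x₀|) ^ (-(3+δ)/2) * ‖v x‖)^2) = A := by
      rw [hAdef]; congr 1; funext x; rw [mul_pow, hwsq3 x]
    have e3 : (∫ x : ℝ, (χ₁ x * ‖u x‖)^2) = ∫ x : ℝ, (χ₁ x)^2 * ‖u x‖^2 := by
      congr 1; funext x; rw [mul_pow]
    rw [e1, e2, e3] at hmk
    exact hmk
  -- Minkowski step 3 : √B ≤ √Q + M √R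
  have hstep3 : Real.sqrt B
      ≤ Real.sqrt (∫ x : ℝ, (1 + |x - x₀|) ^ (-(1+δ)) * ‖deriv u x‖^2)
        + M * Real.sqrt (∫ x : ℝ, (χ₁ x)^2 * ‖u x‖^2) := by
    have hle : ∀ x, (1 + |x - x₀|) ^ (-(1+δ)/2) * ‖deriv v x‖
        ≤ (1 + |x - x₀|) ^ (-(1+δ)/2) * ‖deriv u x‖ + M * (χ₁ x * ‖u x‖) := by
      intro x
      have hw1 : (1 + |x - x₀|) ^ (-(1+δ)/2) ≤ 1 := hwle1 _ (by linarith) x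
      have hw0 : 0 ≤ (1 + |x - x₀|) ^ (-(1+δ)/2) := hwnn _ x
      have h2 : (1 + |x - x₀|) ^ (-(1+δ)/2) * ‖deriv v x‖
          ≤ (1 + |x - x₀|) ^ (-(1+δ)/2) * (‖deriv u x‖ + M * (χ₁ x * ‖u x‖)) :=
        mul_le_mul_of_nonneg_left (hv'_le x) hw0
      have h3 : (1 + |x - x₀|) ^ (-(1+δ)/2) * (M * (χ₁ x * ‖u x‖))
          ≤ 1 * (M * (χ₁ x * ‖u x‖)) :=
        mul_le_mul_of_nonneg_right hw1
          (mul_nonneg hM0 (mul_nonneg (hχ₁0 x) (norm_nonneg _)))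
      nlinarith [h2, h3]
    have hmk := minkowski_step (μ := volume)
      (f := fun x => (1 + |x - x₀|) ^ (-(1+δ)/2) * ‖deriv u x‖)
      (g := fun x => M * (χ₁ x * ‖u x‖))
      (h := fun x => (1 + |x - x₀|) ^ (-(1+δ)/2) * ‖deriv v x‖)
      ((hwcont _).aestronglyMeasurable.mul hu'meas.norm)
      (((hχ₁.continuous.aestronglyMeasurable.mul humeas.norm)).const_mul M)
      (fun x => mul_nonneg (hwnn _ x) (norm_nonneg _))
      (fun x => mul_nonneg hM0 (mul_nonneg (hχ₁0 x) (norm_nonneg _)))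
      (fun x => mul_nonneg (hwnn _ x) (norm_nonneg _))
      hle
      (by
        have he : (fun x => ((1 + |x - x₀|) ^ (-(1+δ)/2) * ‖deriv u x‖)^2)
            = fun x => (1 + |x - x₀|) ^ (-(1+δ)) * ‖deriv u x‖^2 :=
          funext fun x => by rw [mul_pow, hwsq1 x]
        rw [he]; exact hQint)
      (by
        have he : (fun x => (M * (χ₁ x * ‖u x‖))^2)
            = fun x => M^2 * ((χ₁ x)^2 * ‖u x‖^2) := funext fun x => by ring
        rw [he]; exact hRint.const_mul (M^2))
      (by
        have he : (fun x => ((1 + |x - x₀|) ^ (-(1+δ)/2) * ‖deriv v x‖)^2)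
            = fun x => (1 + |x - x₀|) ^ (-(1+δ)) * ‖deriv v x‖^2 :=
          funext fun x => by rw [mul_pow, hwsq1 x]
        rw [he]; exact hBint)
    have e1 : (∫ x : ℝ, ((1 + |x - x₀|) ^ (-(1+δ)/2) * ‖deriv v x‖)^2) = B := by
      rw [hBdef]; congr 1; funext x; rw [mul_pow, hwsq1 x]
    have e2 : (∫ x : ℝ, ((1 + |x - x₀|) ^ (-(1+δ)/2) * ‖deriv u x‖)^2)
        = ∫ x : ℝ, (1 + |x - x₀|) ^ (-(1+δ)) * ‖deriv u x‖^2 := by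
      congr 1; funext x; rw [mul_pow, hwsq1 x]
    have e3 : Real.sqrt (∫ x : ℝ, (M * (χ₁ x * ‖u x‖))^2)
        = M * Real.sqrt (∫ x : ℝ, (χ₁ x)^2 * ‖u x‖^2) := by
      have e3' : (∫ x : ℝ, (M * (χ₁ x * ‖u x‖))^2)
          = M^2 * ∫ x : ℝ, (χ₁ x)^2 * ‖u x‖^2 := by
        calc (∫ x : ℝ, (M * (χ₁ x * ‖u x‖))^2)
            = ∫ x : ℝ, M^2 * ((χ₁ x)^2 * ‖u x‖^2) := by congr 1; funext x; ring
          _ = M^2 * ∫ x : ℝ, (χ₁ x)^2 * ‖u x‖^2 := integral_const_mul _ _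
      rw [e3', Real.sqrt_mul (sq_nonneg M), Real.sqrt_sq hM0]
    rw [e1, e2, e3] at hmk
    exact hmk
  -- final chain
  calc Real.sqrt (∫ x : ℝ, (1 + |x - x₀|) ^ (-(3+δ)) * ‖u x‖^2)
      ≤ Real.sqrt A + Real.sqrt (∫ x : ℝ, (χ₁ x)^2 * ‖u x‖^2) := hstep1
    _ ≤ (2/(2+δ)) * Real.sqrt B + Real.sqrt (∫ x : ℝ, (χ₁ x)^2 * ‖u x‖^2) := by
        linarith [hsqA]
    _ ≤ (2/(2+δ)) * (Real.sqrt (∫ x : ℝ, (1 + |x - x₀|) ^ (-(1+δ)) * ‖deriv u x‖^2)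
          + M * Real.sqrt (∫ x : ℝ, (χ₁ x)^2 * ‖u x‖^2))
        + Real.sqrt (∫ x : ℝ, (χ₁ x)^2 * ‖u x‖^2) := by
        have := mul_le_mul_of_nonneg_left hstep3 hc0
        linarith
    _ = (2/(2+δ)) * Real.sqrt (∫ x : ℝ, (1 + |x - x₀|) ^ (-(1+δ)) * ‖deriv u x‖^2)
        + (2/(2+δ) * M + 1) * Real.sqrt (∫ x : ℝ, (χ₁ x)^2 * ‖u x‖^2) := by ring
end

section
/- Let Y ⊆ ℝ^{d-1} be bounded open, let {φ_j} be an orthonormal set in L²(Y) with real numbers σ_j, E₁ such that σ_j² ≠ E₁ implies γ_j ∈ ℂ, and suppose u, defined for x > R₀ by u(x,y) = Σ_{σ_j² < E₁} γ_j e^{i x √(E₁ - σ_j²)} φ_j(y) + Σ_{σ_j² ≥ E₁} γ_j e^{-x√(σ_j² - E₁)} φ_j(y), satisfies, for some R > R₀, Im ∫_{{x=R}} (∂ₓu) · conj(u) dy = 0 with all coefficients γ_j with σ_j² ≥ E₁ giving exponentially decaying or constant-in-x terms. Then Σ_{σ_j² < E₁} √(E₁ - σ_j²) |γ_j|² equals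 the imaginary part of the above boundary integral up to exponentially small (in R) corrections; in particular, if the limit as R → ∞ of Im ∫_{{x=R}} (∂ₓu) conj(u) dy is 0, then γ_j = 0 for every j with σ_j² < E₁. -/
open MeasureTheory Filter

/-- Key orthogonality computation from the proof of Theorem 1.8 (finite-sum
version).  With Y ⊆ ℝ^{d-1} bounded open, {φⱼ} orthonormal in L²(Y), σⱼ > 0,
exponents cⱼ = i√(E₁-σⱼ²) for oscillatory modes (σⱼ² < E₁) and
cⱼ = -√(σⱼ²-E₁) for decaying modes, and
u(x,y) = Σⱼ γⱼ e^{cⱼx} φⱼ(y): if Im∫_Y (∂ₓu)(R,·) conj(u(R,·)) → 0 as R → ∞,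
then γⱼ = 0 for every j with σⱼ² < E₁. -/
theorem stmt13 (m n : ℕ) (Y : Set (EuclideanSpace ℝ (Fin m)))
    (hY : IsOpen Y) (hYb : Bornology.IsBounded Y)
    (φ : Fin n → EuclideanSpace ℝ (Fin m) → ℂ)
    (hint : ∀ j k : Fin n,
      Integrable (fun y => φ j y * (starRingEnd ℂ) (φ k y))
        ((volume : Measure (EuclideanSpace ℝ (Fin m))).restrict Y))
    (horth : ∀ j k : Fin n,
      ∫ y in Y, φ j y * (starRingEnd ℂ) (φ k y)
        = if j = k then 1 else 0)
    (γ : Fin n → ℂ) (σ : Fin n → ℝ) (E₁ : ℝ) (hσ : ∀ j, 0 < σ j)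
    (c : Fin n → ℂ)
    (hc : ∀ j, c j =
      if σ j ^ 2 < E₁ then Complex.I * (Real.sqrt (E₁ - σ j ^ 2) : ℂ)
      else -(Real.sqrt (σ j ^ 2 - E₁) : ℂ))
    (hlim : Tendsto (fun R : ℝ =>
        (∫ y in Y,
          (∑ j, γ j * c j * Complex.exp (c j * R) * φ j y) *
            (starRingEnd ℂ)
              (∑ j, γ j * Complex.exp (c j * R) * φ j y)).im)
      atTop (nhds 0)) :
    ∀ j : Fin n, σ j ^ 2 < E₁ → γ j = 0 := by
  intro j₀ hj₀
  set A : Fin n → ℝ → ℂ := fun j R => γ j * c j * Complex.exp (c j * R) with hA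
  set B : Fin n → ℝ → ℂ := fun j R => γ j * Complex.exp (c j * R) with hB
  have key : ∀ R : ℝ,
      (∫ y in Y, (∑ j, A j R * φ j y) * (starRingEnd ℂ) (∑ j, B j R * φ j y))
        = ∑ j, A j R * (starRingEnd ℂ) (B j R) := by
    intro R
    have h1 : ∀ y, (∑ j, A j R * φ j y) * (starRingEnd ℂ) (∑ j, B j R * φ j y)
        = ∑ j, ∑ k, (A j R * (starRingEnd ℂ) (B k R)) *
            (φ j y * (starRingEnd ℂ) (φ k y)) := by
      intro y
      rw [map_sum, Finset.sum_mul_sum]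
      refine Finset.sum_congr rfl fun j _ => Finset.sum_congr rfl fun k _ => ?_
      rw [map_mul]; ring
    simp_rw [h1]
    rw [integral_finset_sum _ (fun j _ => integrable_finset_sum _
      (fun k _ => (hint j k).const_mul _))]
    refine Finset.sum_congr rfl fun j _ => ?_
    rw [integral_finset_sum _ (fun k _ => (hint j k).const_mul _)]
    have h2 : ∀ k, (∫ y in Y, (A j R * (starRingEnd ℂ) (B k R)) *
        (φ j y * (starRingEnd ℂ) (φ k y)))
        = (A j R * (starRingEnd ℂ) (B k R)) * (if j = k then 1 else 0) := by
      intro k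
      rw [integral_const_mul, horth j k]
    simp_rw [h2]
    simp
  have him : ∀ R : ℝ, (∑ j, A j R * (starRingEnd ℂ) (B j R)).im
      = ∑ j, (if σ j ^ 2 < E₁ then
          Real.sqrt (E₁ - σ j ^ 2) * Complex.normSq (γ j) else 0) := by
    intro R
    rw [Complex.im_sum]
    refine Finset.sum_congr rfl fun j _ => ?_
    by_cases h : σ j ^ 2 < E₁
    · simp only [h, if_true]
      set a : ℝ := Real.sqrt (E₁ - σ j ^ 2) with ha
      have hcj : c j = Complex.I * (a : ℂ) := by rw [hc j, if_pos h]
      have hconj : (starRingEnd ℂ) (Complex.exp (c j * R))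
          = Complex.exp (-(c j * R)) := by
        rw [← Complex.exp_conj]
        congr 1
        rw [hcj]
        simp [map_mul, Complex.conj_I, Complex.conj_ofReal]
      have : A j R * (starRingEnd ℂ) (B j R)
          = (γ j * (starRingEnd ℂ) (γ j)) * c j *
              (Complex.exp (c j * R) * Complex.exp (-(c j * R))) := by
        simp only [hA, hB, map_mul, hconj]; ring
      rw [this, ← Complex.exp_add, add_neg_cancel, Complex.exp_zero, mul_one,
        Complex.mul_conj, hcj]
      simp [Complex.mul_im]
      ring
    · simp only [h, if_false]
      set a : ℝ := Real.sqrt (σ j ^ 2 - E₁) with ha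
      have hcj : c j = -(a : ℂ) := by rw [hc j, if_neg h]
      have hexp : Complex.exp (c j * R) = (Real.exp (-(a * R)) : ℂ) := by
        rw [hcj, Complex.ofReal_exp]
        push_cast
        ring_nf
      have : A j R * (starRingEnd ℂ) (B j R)
          = (γ j * (starRingEnd ℂ) (γ j)) * c j *
              (Complex.exp (c j * R) * (starRingEnd ℂ) (Complex.exp (c j * R))) := by
        simp only [hA, hB, map_mul]; ring
      rw [this, hexp, Complex.conj_ofReal, Complex.mul_conj, hcj]
      have h3 : ((Complex.normSq (γ j) * -a * (Real.exp (-(a*R)) * Real.exp (-(a*R))) : ℝ) : ℂ)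
          = (Complex.normSq (γ j) : ℂ) * -(a:ℂ) *
            ((Real.exp (-(a*R)) : ℂ) * (Real.exp (-(a*R)) : ℂ)) := by
        simp [Complex.ofReal_mul, Complex.ofReal_neg]
      rw [← h3]
      exact Complex.ofReal_im _
  set S : ℝ := ∑ j, (if σ j ^ 2 < E₁ then
      Real.sqrt (E₁ - σ j ^ 2) * Complex.normSq (γ j) else 0) with hS
  have hconst : (fun R : ℝ =>
      (∫ y in Y,
        (∑ j, γ j * c j * Complex.exp (c j * R) * φ j y) *
          (starRingEnd ℂ)
            (∑ j, γ j * Complex.exp (c j * R) * φ j y)).im) = fun _ => S := by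
    funext R
    have := key R
    simp only [hA, hB] at this
    rw [this]
    exact him R
  rw [hconst] at hlim
  have hS0 : S = 0 := tendsto_nhds_unique tendsto_const_nhds hlim
  have hnonneg : ∀ j ∈ Finset.univ, (0:ℝ) ≤ (if σ j ^ 2 < E₁ then
      Real.sqrt (E₁ - σ j ^ 2) * Complex.normSq (γ j) else 0) := by
    intro j _
    split
    · exact mul_nonneg (Real.sqrt_nonneg _) (Complex.normSq_nonneg _)
    · exact le_refl 0
  have hterm := (Finset.sum_eq_zero_iff_of_nonneg hnonneg).mp hS0 j₀ (Finset.mem_univ _)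
  rw [if_pos hj₀] at hterm
  have hapos : 0 < Real.sqrt (E₁ - σ j₀ ^ 2) := Real.sqrt_pos.mpr (by linarith)
  have : Complex.normSq (γ j₀) = 0 := by
    rcases mul_eq_zero.mp hterm with h | h
    · exact absurd h (ne_of_gt hapos)
    · exact h
  exact Complex.normSq_eq_zero.mp this
end
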